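/- arXiv:2401.09609 — 2 statements merged into one kernel-verified Lean document; each statement's English description precedes it below -/
import Mathlib

section
/- Let D ⊆ ℝⁿ be a nonempty (possibly infinite) set of nonzero vectors. Then pspan(D) = span(D) if and only if for every d ∈ D, the vector −d lies in pspan(D \ {d}). -/
open scoped RealInnerProductSpace

noncomputable section

/-- The positive span of a set `D`: all finite nonnegative linear combinations
of elements of `D`. -/
def pspan {E : Type*} [AddCommGroup E] [Module ℝ E] (D : Set E) : Set E :=
  {x | ∃ (k : ℕ) (d : Fin k → E) (c : Fin k → ℝ),
    (∀ i, d i ∈ D) ∧ (∀ i, 0 ≤ c i) ∧ x = ∑ i, c i • d i}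

/-- The cosine measure of `D` relative to a subspace `L`:
`min` over unit vectors `u ∈ L` of `sup_{d ∈ D} ⟪u, d⟫ / ‖d‖`. -/
noncomputable def cmRel {E : Type*} [NormedAddCommGroup E] [InnerProductSpace ℝ E]
    (L : Submodule ℝ E) (D : Set E) : ℝ :=
  sInf ((fun u => sSup ((fun d => ⟪u, d⟫ / ‖d‖) '' D)) '' {u : E | u ∈ L ∧ ‖u‖ = 1})

/-- The cosine vector set of `D` relative to a subspace `L`: the set of unit
vectors `u ∈ L` attaining the minimum defining `cmRel L D`. -/
noncomputable def cVRel {E : Type*} [NormedAddCommGroup E] [InnerProductSpace ℝ E]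
    (L : Submodule ℝ E) (D : Set E) : Set E :=
  {u : E | u ∈ L ∧ ‖u‖ = 1 ∧ sSup ((fun d => ⟪u, d⟫ / ‖d‖) '' D) = cmRel L D}

/-! `pspan D` is the cone hull of `D`. A cone equals the linear span of `D` iff it contains `-D`,
since then `D` lies in its lineality space. And `-d ∈ hull D` already gives `-d ∈ hull (D \ {d})`:
from `-d = a • d + z` with `a ≥ 0` and `z ∈ hull (D \ {d})` we get `-d = (1 + a)⁻¹ • z`. -/

open PointedCone

theorem pspan_eq_hull {E : Type*} [AddCommGroup E] [Module ℝ E] (D : Set E) :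
    pspan D = (hull ℝ D : Set E) := by
  ext x
  rw [SetLike.mem_coe, Submodule.mem_span_set']
  constructor
  · rintro ⟨k, d, c, hd, hc, rfl⟩
    exact ⟨k, fun i => ⟨c i, hc i⟩, fun i => ⟨d i, hd i⟩, rfl⟩
  · rintro ⟨k, c, d, rfl⟩
    exact ⟨k, fun i => d i, fun i => c i, fun i => (d i).2, fun i => (c i).2, rfl⟩

namespace PointedCone

variable {R E : Type*} [Field R] [LinearOrder R] [IsStrictOrderedRing R]
  [AddCommGroup E] [Module R E] {s : Set E}

theorem hull_eq_span_iff :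
    (hull R s : Set E) = Submodule.span R s ↔ ∀ x ∈ s, -x ∈ hull R s := by
  constructor
  · intro h x hx
    rw [← SetLike.mem_coe, h]
    exact neg_mem (Submodule.subset_span hx)
  · intro h
    have hspan : Submodule.span R s ≤ (hull R s).lineal :=
      Submodule.span_le.mpr fun x hx => mem_lineal.mpr ⟨subset_hull hx, h x hx⟩
    exact subset_antisymm (hull_le_span R s) fun x hx => lineal_le _ (hspan hx)

theorem neg_mem_hull_diff_singleton_iff {x : E} :
    -x ∈ hull R (s \ {x}) ↔ -x ∈ hull R s := by
  refine ⟨fun h => Submodule.span_mono Set.sdiff_subset h, fun h => ?_⟩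
  have hsup : -x ∈ hull R {x} ⊔ hull R (s \ {x}) := by
    rw [← Submodule.span_insert]
    exact Submodule.span_mono (by simp) h
  obtain ⟨y, hy, z, hz, hyz⟩ := Submodule.mem_sup.mp hsup
  obtain ⟨⟨a, ha⟩, rfl⟩ := Submodule.mem_span_singleton.mp hy
  rw [Nonneg.mk_smul] at hyz
  have ha' : (0 : R) < 1 + a := by linarith
  have hx : -x = (⟨(1 + a)⁻¹, (inv_pos.mpr ha').le⟩ : {c : R // 0 ≤ c}) • z := by
    rw [Nonneg.mk_smul, eq_sub_of_add_eq' hyz, show -x - a • x = (1 + a) • -x by module,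
      smul_smul, inv_mul_cancel₀ ha'.ne', one_smul]
  rw [hx]
  exact Submodule.smul_mem _ _ hz

end PointedCone

theorem stmt3_general {n : ℕ} (D : Set (EuclideanSpace ℝ (Fin n))) :
    pspan D = (Submodule.span ℝ D : Set (EuclideanSpace ℝ (Fin n))) ↔
      ∀ d ∈ D, -d ∈ pspan (D \ {d}) := by
  simp only [pspan_eq_hull, SetLike.mem_coe, neg_mem_hull_diff_singleton_iff]
  exact hull_eq_span_iff

theorem stmt3 {n : ℕ} (D : Set (EuclideanSpace ℝ (Fin n))) (hne : D.Nonempty)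
    (h0 : (0 : EuclideanSpace ℝ (Fin n)) ∉ D) :
    pspan D = (Submodule.span ℝ D : Set (EuclideanSpace ℝ (Fin n))) ↔
      ∀ d ∈ D, -d ∈ pspan (D \ {d}) :=
  stmt3_general D
end
end

section
/- Let D ⊆ ℝⁿ be a nonempty (possibly infinite) set of nonzero vectors, let m = dim(span(D)), and let B = {b₁, …, b_m} ⊆ D be a basis of span(D). Define w = −(b₁ + ⋯ + b_m). Then (i) pspan(D ∪ {w}) = span(D), and (ii) pspan(D ∪ (−B)) = span(D), where −B = {−b₁, …, −b_m}. -/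
open scoped RealInnerProductSpace

noncomputable section

/-
The cone generated by `D ∪ {w}` contains each `bⱼ` and also `-bⱼ = w + ∑_{i ≠ j} bᵢ`; likewise
`D ∪ (-B)` contains `±bⱼ`. A cone `C` containing `±bⱼ` for all `j` contains the linear span of
the `bⱼ`, which is `span D`, because `C ∩ -C` is a linear subspace.
-/

section PointedCone

variable {R E ι : Type*} [AddCommGroup E]

theorem PointedCone.neg_mem_of_neg_sum_mem [Semiring R] [PartialOrder R] [IsOrderedRing R]
    [Module R E] [Fintype ι] [DecidableEq ι] {C : PointedCone R E} {b : ι → E}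
    (hb : ∀ i, b i ∈ C) (hsum : -∑ i, b i ∈ C) (j : ι) : -b j ∈ C := by
  have hsplit : -b j = -∑ i, b i + ∑ i ∈ Finset.univ.erase j, b i := by
    rw [← Finset.add_sum_erase _ _ (Finset.mem_univ j)]
    abel
  rw [hsplit]
  exact add_mem hsum (Submodule.sum_mem _ fun i _ => hb i)

theorem PointedCone.span_range_le_of_neg_mem [Ring R] [LinearOrder R] [IsOrderedRing R]
    [Module R E] {C : PointedCone R E} {b : ι → E} (hb : ∀ i, b i ∈ C) (hneg : ∀ i, -b i ∈ C) :
    (Submodule.span R (Set.range b) : PointedCone R E) ≤ C :=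
  PointedCone.gc_ofSubmodule_lineal.le_iff_le.2 <|
    Submodule.span_le.2 <| Set.range_subset_iff.2 fun i => ⟨hb i, hneg i⟩

end PointedCone

section pspan

variable {E ι : Type*} [AddCommGroup E] [Module ℝ E]

theorem pspan_eq_hull_s5 (s : Set E) : pspan s = PointedCone.hull ℝ s := by
  ext x
  rw [SetLike.mem_coe, Submodule.mem_span_set']
  constructor
  · rintro ⟨k, d, c, hd, hc, rfl⟩
    exact ⟨k, fun i => ⟨c i, hc i⟩, fun i => ⟨d i, hd i⟩, rfl⟩
  · rintro ⟨k, c, d, rfl⟩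
    exact ⟨k, fun i => d i, fun i => c i, fun i => (d i).2, fun i => (c i).2, rfl⟩

theorem pspan_union_eq_span {s u : Set E} {b : ι → E} (hb : ∀ i, b i ∈ s)
    (hspan : Submodule.span ℝ (Set.range b) = Submodule.span ℝ s)
    (hu : u ⊆ Submodule.span ℝ s) (hneg : ∀ i, -b i ∈ PointedCone.hull ℝ (s ∪ u)) :
    pspan (s ∪ u) = Submodule.span ℝ s := by
  rw [pspan_eq_hull_s5]
  refine Set.Subset.antisymm ?_ ?_
  · show PointedCone.hull ℝ (s ∪ u) ≤ (Submodule.span ℝ s : PointedCone ℝ E)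
    exact Submodule.span_le.2 (Set.union_subset Submodule.subset_span hu)
  · rw [← hspan]
    exact PointedCone.span_range_le_of_neg_mem
      (fun i => PointedCone.subset_hull (Or.inl (hb i))) hneg

end pspan

theorem stmt5_general {n m : ℕ} (D : Set (EuclideanSpace ℝ (Fin n)))
    (b : Fin m → EuclideanSpace ℝ (Fin n)) (hbD : ∀ i, b i ∈ D)
    (hspan : Submodule.span ℝ (Set.range b) = Submodule.span ℝ D) :
    pspan (D ∪ {-(∑ i, b i)}) =
      (Submodule.span ℝ D : Set (EuclideanSpace ℝ (Fin n))) ∧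
    pspan (D ∪ Set.range fun i => -(b i)) =
      (Submodule.span ℝ D : Set (EuclideanSpace ℝ (Fin n))) := by
  have hb : ∀ i, b i ∈ Submodule.span ℝ D := fun i => Submodule.subset_span (hbD i)
  constructor
  · refine pspan_union_eq_span hbD hspan ?_ ?_
    · rw [Set.singleton_subset_iff]
      exact neg_mem (sum_mem fun i _ => hb i)
    · exact PointedCone.neg_mem_of_neg_sum_mem
        (fun i => PointedCone.subset_hull (Or.inl (hbD i)))
        (PointedCone.subset_hull (Or.inr rfl))
  · refine pspan_union_eq_span hbD hspan ?_ ?_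
    · exact Set.range_subset_iff.2 fun i => neg_mem (hb i)
    · exact fun i => PointedCone.subset_hull (Or.inr ⟨i, rfl⟩)

theorem stmt5 {n m : ℕ} (D : Set (EuclideanSpace ℝ (Fin n))) (hne : D.Nonempty)
    (h0 : (0 : EuclideanSpace ℝ (Fin n)) ∉ D)
    (b : Fin m → EuclideanSpace ℝ (Fin n)) (hbD : ∀ i, b i ∈ D)
    (hli : LinearIndependent ℝ b)
    (hspan : Submodule.span ℝ (Set.range b) = Submodule.span ℝ D)
    (hm : m = Module.finrank ℝ (Submodule.span ℝ D)) :
    pspan (D ∪ {-(∑ i, b i)}) =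
      (Submodule.span ℝ D : Set (EuclideanSpace ℝ (Fin n))) ∧
    pspan (D ∪ Set.range fun i => -(b i)) =
      (Submodule.span ℝ D : Set (EuclideanSpace ℝ (Fin n))) :=
  stmt5_general D b hbD hspan
end
end
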